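/- In the field ℚ(x_1,x_2) of rational functions in two variables over ℚ, the following identity holds: (x_1 − x_2)·1/((1−x_1^2)^2(1−x_1x_2)^2(1−x_2^2)^2) = x_1·h(x_1, x_1x_2) − x_2·h(x_2, x_1x_2), where h(v_1,v_2) = (1 + v_1^2v_2)/((1−v_1^2)^2(1−v_2^2)^3). (This expresses that h is the multiplicity series M' of the Hilbert series of the symmetric algebra K[W(2)⊕W(2)] of the GL_2-module W(2)⊕W(2).) -/

import Mathlib

/-! All denominators are `1 - m` for monomials `m` of positive degree, so they have constant
term `1` and are nonzero in `ℚ(x₁,x₂)`; after clearing them the identity is a polynomial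
identity in any field. -/

/-- The candidate multiplicity series `M'(H(K[W(2)⊕W(2)]); v₁, v₂)`. -/
noncomputable def multSeriesW2W2 (v1 v2 : FractionRing (MvPolynomial (Fin 2) ℚ)) :
    FractionRing (MvPolynomial (Fin 2) ℚ) :=
  (1 + v1 ^ 2 * v2) / ((1 - v1 ^ 2) ^ 2 * (1 - v2 ^ 2) ^ 3)

theorem identity_W2W2_of_ne_zero {K : Type*} [Field K] {x y : K}
    (hx : 1 - x ^ 2 ≠ 0) (hy : 1 - y ^ 2 ≠ 0) (hxy : 1 - (x * y) ^ 2 ≠ 0) :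
    (x - y) * (1 / ((1 - x ^ 2) ^ 2 * (1 - x * y) ^ 2 * (1 - y ^ 2) ^ 2)) =
      x * ((1 + x ^ 2 * (x * y)) / ((1 - x ^ 2) ^ 2 * (1 - (x * y) ^ 2) ^ 3)) -
        y * ((1 + y ^ 2 * (x * y)) / ((1 - y ^ 2) ^ 2 * (1 - (x * y) ^ 2) ^ 3)) := by
  have hxy' : 1 - x * y ≠ 0 := fun h ↦ hxy (by linear_combination (1 + x * y) * h)
  rw [mul_pow] at hxy ⊢
  field_simp
  ring

theorem MvPolynomial.one_sub_algebraMap_ne_zero {σ R K : Type*} [CommRing R] [Field K]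
    [Algebra (MvPolynomial σ R) K] [IsFractionRing (MvPolynomial σ R) K] [Nontrivial R]
    {p : MvPolynomial σ R} (hp : constantCoeff p = 0) :
    1 - algebraMap (MvPolynomial σ R) K p ≠ 0 := by
  rw [← map_one (algebraMap (MvPolynomial σ R) K), ← map_sub,
    map_ne_zero_iff _ (IsFractionRing.injective (MvPolynomial σ R) K)]
  intro h
  simpa [hp] using congrArg constantCoeff h

/-- In `ℚ(x₁,x₂)` one has
`(x₁ − x₂)/((1−x₁²)²(1−x₁x₂)²(1−x₂²)²) = x₁·h(x₁,x₁x₂) − x₂·h(x₂,x₁x₂)`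
with `h(v₁,v₂) = (1 + v₁²v₂)/((1−v₁²)²(1−v₂²)³)`, i.e. `h` is the multiplicity
series of the Hilbert series of the symmetric algebra `K[W(2)⊕W(2)]`. -/
theorem multiplicity_series_KW2W2
    (x1 x2 : FractionRing (MvPolynomial (Fin 2) ℚ))
    (hx1 : x1 = algebraMap (MvPolynomial (Fin 2) ℚ) _ (MvPolynomial.X 0))
    (hx2 : x2 = algebraMap (MvPolynomial (Fin 2) ℚ) _ (MvPolynomial.X 1)) :
    (x1 - x2) *
        (1 / ((1 - x1 ^ 2) ^ 2 * (1 - x1 * x2) ^ 2 * (1 - x2 ^ 2) ^ 2)) =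
      x1 * multSeriesW2W2 x1 (x1 * x2) - x2 * multSeriesW2W2 x2 (x1 * x2) := by
  subst hx1 hx2
  unfold multSeriesW2W2
  apply identity_W2W2_of_ne_zero
  · rw [← map_pow]
    exact MvPolynomial.one_sub_algebraMap_ne_zero (by simp)
  · rw [← map_pow]
    exact MvPolynomial.one_sub_algebraMap_ne_zero (by simp)
  · rw [← map_mul, ← map_pow]
    exact MvPolynomial.one_sub_algebraMap_ne_zero (by simp)
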